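/- Let ζ lie on the interval [−e^{iπ/4}/√2, e^{iπ/4}/√2] (i.e., ζ = ±|ζ|e^{iπ/4}) and let z = ζ ± |z−ζ|e^{i3π/4} lie on the normal to this interval at ζ. Then dist(z², [0, i/2]) = 2|ζ||z−ζ| if |z−ζ| ≤ |ζ|, and dist(z², [0, i/2]) = |ζ|² + |z−ζ|² = |z|² if |z−ζ| ≥ |ζ|. In particular, dist(z², [0,i/2]) ≥ 2|ζ||z−ζ| always holds. -/

import Mathlib

/-!
Write `E = exp (iπ/4)`, so that `E² = i` and `exp (3iπ/4) = E i`. With `u = σ r` and `v = τ d`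
we get `ζ = u E`, `z - ζ = v E i` and `z² = i (u + v i)² = -2uv + (u² - v²) i`. For `v² ≤ u² ≤ 1/2`
this point lies level with the segment `[0, i/2]`, at distance `|2uv|` from it; for `u² ≤ v²` it
lies below the real axis, and its nearest point on the segment is `0`, at distance
`|z²| = u² + v²`.
-/

open Complex

/-- The segment `[0, i/2] = {it : t ∈ [0, 1/2]} ⊂ ℂ`. -/
def segZeroIHalf : Set ℂ :=
  (fun t : ℝ => (t : ℂ) * Complex.I) '' Set.Icc (0 : ℝ) (1 / 2)

open Metric

lemma zero_mem_segZeroIHalf : (0 : ℂ) ∈ segZeroIHalf :=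
  ⟨0, by norm_num, by simp⟩

lemma segZeroIHalf_nonempty : segZeroIHalf.Nonempty :=
  ⟨0, zero_mem_segZeroIHalf⟩

lemma infDist_segZeroIHalf_of_im_mem_Icc {w : ℂ} (hw : w.im ∈ Set.Icc (0 : ℝ) (1 / 2)) :
    infDist w segZeroIHalf = |w.re| := by
  refine le_antisymm ?_ ((le_infDist segZeroIHalf_nonempty).2 ?_)
  · calc infDist w segZeroIHalf ≤ dist w (w.im * I) := infDist_le_dist_of_mem ⟨w.im, hw, rfl⟩
      _ = |w.re| := by
        have : w - w.im * I = w.re := by apply Complex.ext <;> simp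
        rw [dist_eq, this, norm_real, Real.norm_eq_abs]
  · rintro _ ⟨t, -, rfl⟩
    simpa [dist_eq] using abs_re_le_norm (w - t * I)

lemma infDist_segZeroIHalf_of_im_nonpos {w : ℂ} (hw : w.im ≤ 0) :
    infDist w segZeroIHalf = ‖w‖ := by
  refine le_antisymm ?_ ((le_infDist segZeroIHalf_nonempty).2 ?_)
  · simpa using infDist_le_dist_of_mem (x := w) zero_mem_segZeroIHalf
  · rintro _ ⟨t, ht, rfl⟩
    rw [dist_eq, norm_def, norm_def]
    apply Real.sqrt_le_sqrt
    simp only [normSq_apply, sub_re, sub_im, mul_re, mul_im, ofReal_re, ofReal_im, I_re, I_im]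
    nlinarith [ht.1]

lemma exp_pi_div_four_mul_I_sq : cexp (Real.pi / 4 * I) ^ 2 = I := by
  rw [← exp_nat_mul]
  convert exp_pi_div_two_mul_I using 2
  push_cast
  ring

lemma norm_exp_pi_div_four_mul_I : ‖cexp (Real.pi / 4 * I)‖ = 1 := by
  simpa using norm_exp_ofReal_mul_I (Real.pi / 4)

lemma exp_three_pi_div_four_mul_I :
    cexp (3 * Real.pi / 4 * I) = cexp (Real.pi / 4 * I) * I := by
  calc cexp (3 * Real.pi / 4 * I) = cexp (Real.pi / 4 * I + Real.pi / 2 * I) := by ring_nf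
    _ = cexp (Real.pi / 4 * I) * I := by rw [exp_add, exp_pi_div_two_mul_I]

lemma re_I_mul_sq (u v : ℝ) : (I * (u + v * I) ^ 2).re = -(2 * u * v) := by
  simp only [sq, mul_re, mul_im, add_re, add_im, ofReal_re, ofReal_im, I_re, I_im]
  ring

lemma im_I_mul_sq (u v : ℝ) : (I * (u + v * I) ^ 2).im = u ^ 2 - v ^ 2 := by
  simp [sq]

lemma sq_le_half_of_le_one_div_sqrt_two {r : ℝ} (hr0 : 0 ≤ r) (hr : r ≤ 1 / Real.sqrt 2) :
    r ^ 2 ≤ 1 / 2 :=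
  calc r ^ 2 ≤ (1 / Real.sqrt 2) ^ 2 := pow_le_pow_left₀ hr0 hr 2
    _ = 1 / 2 := by rw [div_pow, one_pow, Real.sq_sqrt zero_le_two]

lemma infDist_I_mul_sq_eq_two_mul_abs_mul_abs {u v : ℝ} (hu : u ^ 2 ≤ 1 / 2) (hvu : |v| ≤ |u|) :
    infDist (I * (u + v * I) ^ 2) segZeroIHalf = 2 * |u| * |v| := by
  have hv : v ^ 2 ≤ u ^ 2 := sq_le_sq.2 hvu
  have him : (I * (u + v * I) ^ 2).im ∈ Set.Icc (0 : ℝ) (1 / 2) := by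
    rw [im_I_mul_sq]
    constructor <;> nlinarith [sq_nonneg v]
  rw [infDist_segZeroIHalf_of_im_mem_Icc him, re_I_mul_sq, abs_neg, abs_mul, abs_mul, abs_two]

lemma infDist_I_mul_sq_eq_sq_add_sq {u v : ℝ} (huv : |u| ≤ |v|) :
    infDist (I * (u + v * I) ^ 2) segZeroIHalf = u ^ 2 + v ^ 2 := by
  have hv : u ^ 2 ≤ v ^ 2 := sq_le_sq.2 huv
  rw [infDist_segZeroIHalf_of_im_nonpos (by rw [im_I_mul_sq]; linarith), norm_mul, norm_I,
    one_mul, norm_pow, Complex.sq_norm, normSq_add_mul_I]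

theorem dist_sq_to_segment_general (σ τ r d : ℝ)
    (hσ : σ = 1 ∨ σ = -1)
    (hr0 : 0 ≤ r) (hr : r ≤ 1 / Real.sqrt 2)
    (ζ z : ℂ)
    (hζ : ζ = (σ : ℂ) * (r : ℂ) * Complex.exp ((Real.pi : ℂ) / 4 * Complex.I))
    (hz : z = ζ + (τ : ℂ) * (d : ℂ) * Complex.exp (3 * (Real.pi : ℂ) / 4 * Complex.I)) :
    (‖z - ζ‖ ≤ ‖ζ‖ →
      Metric.infDist (z ^ 2) segZeroIHalf = 2 * ‖ζ‖ * ‖z - ζ‖) ∧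
    (‖ζ‖ ≤ ‖z - ζ‖ →
      Metric.infDist (z ^ 2) segZeroIHalf = ‖ζ‖ ^ 2 + ‖z - ζ‖ ^ 2 ∧
      ‖ζ‖ ^ 2 + ‖z - ζ‖ ^ 2 = ‖z‖ ^ 2) ∧
    2 * ‖ζ‖ * ‖z - ζ‖ ≤ Metric.infDist (z ^ 2) segZeroIHalf := by
  set u := σ * r
  set v := τ * d
  have hz' : z = cexp (Real.pi / 4 * I) * (u + v * I) := by
    rw [hz, hζ, exp_three_pi_div_four_mul_I]
    simp only [u, v]
    push_cast
    ring
  have hζ_norm : ‖ζ‖ = |u| := by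
    rw [hζ, ← ofReal_mul, norm_mul, norm_real, norm_exp_pi_div_four_mul_I, mul_one,
      Real.norm_eq_abs]
  have hzζ_norm : ‖z - ζ‖ = |v| := by
    rw [hz, add_sub_cancel_left, exp_three_pi_div_four_mul_I, ← ofReal_mul, norm_mul, norm_mul,
      norm_real, norm_exp_pi_div_four_mul_I, norm_I, mul_one, mul_one, Real.norm_eq_abs]
  have hz_sq : z ^ 2 = I * (u + v * I) ^ 2 := by
    rw [hz', mul_pow, exp_pi_div_four_mul_I_sq]
  have hu : u ^ 2 ≤ 1 / 2 := by
    have hσ2 : σ ^ 2 = 1 := by rcases hσ with rfl | rfl <;> norm_num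
    rw [mul_pow, hσ2, one_mul]
    exact sq_le_half_of_le_one_div_sqrt_two hr0 hr
  rw [hζ_norm, hzζ_norm, hz_sq]
  refine ⟨infDist_I_mul_sq_eq_two_mul_abs_mul_abs hu, fun huv => ⟨?_, ?_⟩, ?_⟩
  · rw [infDist_I_mul_sq_eq_sq_add_sq huv, sq_abs, sq_abs]
  · rw [hz', norm_mul, norm_exp_pi_div_four_mul_I, one_mul, Complex.sq_norm, normSq_add_mul_I,
      sq_abs, sq_abs]
  · rcases le_total |v| |u| with hvu | huv
    · exact (infDist_I_mul_sq_eq_two_mul_abs_mul_abs hu hvu).ge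
    · rw [infDist_I_mul_sq_eq_sq_add_sq huv, ← sq_abs u, ← sq_abs v]
      exact two_mul_le_add_sq _ _

theorem dist_sq_to_segment (σ τ r d : ℝ)
    (hσ : σ = 1 ∨ σ = -1) (hτ : τ = 1 ∨ τ = -1)
    (hr0 : 0 ≤ r) (hr : r ≤ 1 / Real.sqrt 2) (hd : 0 ≤ d)
    (ζ z : ℂ)
    (hζ : ζ = (σ : ℂ) * (r : ℂ) * Complex.exp ((Real.pi : ℂ) / 4 * Complex.I))
    (hz : z = ζ + (τ : ℂ) * (d : ℂ) * Complex.exp (3 * (Real.pi : ℂ) / 4 * Complex.I)) :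
    (‖z - ζ‖ ≤ ‖ζ‖ →
      Metric.infDist (z ^ 2) segZeroIHalf = 2 * ‖ζ‖ * ‖z - ζ‖) ∧
    (‖ζ‖ ≤ ‖z - ζ‖ →
      Metric.infDist (z ^ 2) segZeroIHalf = ‖ζ‖ ^ 2 + ‖z - ζ‖ ^ 2 ∧
      ‖ζ‖ ^ 2 + ‖z - ζ‖ ^ 2 = ‖z‖ ^ 2) ∧
    2 * ‖ζ‖ * ‖z - ζ‖ ≤ Metric.infDist (z ^ 2) segZeroIHalf :=
  dist_sq_to_segment_general σ τ r d hσ hr0 hr ζ z hζ hz
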